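/- arXiv:1202.4075 — 2 statements merged into one kernel-verified Lean document; each statement's English description precedes it below -/
import Mathlib

section
/- In Max-Welter, if A = (a_1, ..., a_k) with k ≥ 3 satisfies a_{k-2} + 1 = a_{k-1} ≤ a_k - 2, and A is not of the form (0, 1, ..., k-2, k+i) for any i ≥ 0, then the Sprague-Grundy value of A equals a_k - a_{k-1}. -/
/-- A move in Max-Welter: the coin on the largest occupied square moves to an
empty square strictly to its left. -/
def MWMove (s t : Finset ℕ) : Prop :=
  ∃ (hs : s.Nonempty) (j : ℕ), j < s.max' hs ∧ j ∉ s ∧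
    t = insert j (s.erase (s.max' hs))

theorem MWMove.sum_lt {s t : Finset ℕ} (h : MWMove s t) :
    t.sum id < s.sum id := by
  obtain ⟨hs, j, hj, hjs, rfl⟩ := h
  have hm : s.max' hs ∈ s := s.max'_mem hs
  have hje : j ∉ s.erase (s.max' hs) := fun hc => hjs (Finset.mem_of_mem_erase hc)
  have h2 : (s.erase (s.max' hs)).sum id + s.max' hs = s.sum id :=
    Finset.sum_erase_add s id hm
  rw [Finset.sum_insert hje]
  simp only [id] at *
  omega

/-- Normal-play Sprague-Grundy value of a Max-Welter position. -/
noncomputable def grundy (s : Finset ℕ) : ℕ :=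
  sInf {n : ℕ | ∀ t, ∀ _h : MWMove s t, grundy t ≠ n}
termination_by s.sum id
decreasing_by exact _h.sum_lt

open Classical in
/-- Misère Sprague-Grundy value: terminal positions get value 1. -/
noncomputable def mgrundy (s : Finset ℕ) : ℕ :=
  if ∀ t, ¬ MWMove s t then 1
  else sInf {n : ℕ | ∀ t, ∀ _h : MWMove s t, mgrundy t ≠ n}
termination_by s.sum id
decreasing_by exact _h.sum_lt

/-- Normal play: `s` is a P-position iff every move leads to a non-P-position. -/
def MWPPos (s : Finset ℕ) : Prop :=
  ∀ t, ∀ _h : MWMove s t, ¬ MWPPos t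
termination_by s.sum id
decreasing_by exact _h.sum_lt

/-- Misère play: the player to move wins iff there is no move (the opponent made
the last move and loses), or some move leads to a position losing for the opponent. -/
def MWMisereWin (s : Finset ℕ) : Prop :=
  (∀ t, ¬ MWMove s t) ∨ ∃ t, ∃ _h : MWMove s t, ¬ MWMisereWin t
termination_by s.sum id
decreasing_by exact _h.sum_lt



lemma grundy_def (s : Finset ℕ) :
    grundy s = sInf {n : ℕ | ∀ t, ∀ _h : MWMove s t, grundy t ≠ n} := by
  rw [grundy]

lemma grundy_le_sum_aux : ∀ (N : ℕ) (s : Finset ℕ), s.sum id = N → grundy s ≤ N := by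
  intro N
  induction N using Nat.strong_induction_on with
  | _ N ih =>
    intro s hs
    rw [grundy_def]
    refine Nat.sInf_le fun t ht => ?_
    have h1 := ht.sum_lt
    have h2 := ih (t.sum id) (by omega) t rfl
    omega

lemma grundy_le_sum (s : Finset ℕ) : grundy s ≤ s.sum id := grundy_le_sum_aux _ s rfl

lemma grundy_set_nonempty (s : Finset ℕ) :
    {n : ℕ | ∀ t, ∀ _h : MWMove s t, grundy t ≠ n}.Nonempty := by
  have h : ∀ t, ∀ _h : MWMove s t, grundy t ≠ s.sum id + 1 := by
    intro t ht
    have h1 := ht.sum_lt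
    have h2 := grundy_le_sum t
    omega
  exact ⟨s.sum id + 1, h⟩

lemma grundy_ne_of_move {s t : Finset ℕ} (h : MWMove s t) : grundy t ≠ grundy s := by
  have hmem := Nat.sInf_mem (grundy_set_nonempty s)
  rw [← grundy_def] at hmem
  exact hmem t h

lemma grundy_eq_of {s : Finset ℕ} {g : ℕ}
    (h1 : ∀ t, MWMove s t → grundy t ≠ g)
    (h2 : ∀ v, v < g → ∃ t, MWMove s t ∧ grundy t = v) :
    grundy s = g := by
  rw [grundy_def]
  refine le_antisymm (Nat.sInf_le h1) (le_csInf ⟨g, h1⟩ fun b hb => ?_)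
  by_contra hlt
  push_neg at hlt
  obtain ⟨t, ht, htg⟩ := h2 b hlt
  exact hb t ht htg

lemma mwmove_insert_iff {B : Finset ℕ} {m : ℕ} (h : ∀ x ∈ B, x < m) {t : Finset ℕ} :
    MWMove (insert m B) t ↔ ∃ j, j < m ∧ j ∉ B ∧ t = insert j B := by
  have hmB : m ∉ B := fun hc => lt_irrefl m (h m hc)
  have hne : (insert m B).Nonempty := ⟨m, Finset.mem_insert_self m B⟩
  have hmax : (insert m B).max' hne = m := by
    apply le_antisymm
    · apply Finset.max'_le
      intro x hx
      rcases Finset.mem_insert.1 hx with rfl | hx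
      · exact le_refl x
      · exact (h x hx).le
    · exact Finset.le_max' _ m (Finset.mem_insert_self m B)
  constructor
  · rintro ⟨hs, j, hj, hjs, rfl⟩
    have hmax' : (insert m B).max' hs = m := hmax
    rw [hmax'] at hj ⊢
    rw [Finset.erase_insert hmB]
    exact ⟨j, hj, fun hc => hjs (Finset.mem_insert_of_mem hc), rfl⟩
  · rintro ⟨j, hj, hjB, rfl⟩
    refine ⟨hne, j, by rw [hmax]; exact hj, ?_, by rw [hmax, Finset.erase_insert hmB]⟩
    intro hc
    rcases Finset.mem_insert.1 hc with rfl | hc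
    · omega
    · exact hjB hc

lemma exists_gap {B : Finset ℕ} {b : ℕ} (hb : b ∈ B) (hub : ∀ x ∈ B, x ≤ b)
    (hne : B ≠ Finset.range B.card) : ∃ j, j < b ∧ j ∉ B := by
  by_contra hc
  push_neg at hc
  apply hne
  have hBr : B = Finset.range (b + 1) := by
    ext x
    simp only [Finset.mem_range]
    constructor
    · intro hx; exact Nat.lt_succ_of_le (hub x hx)
    · intro hx
      rcases Nat.lt_or_ge x b with h | h
      · exact hc x h
      · have : x = b := by omega
        exact this ▸ hb
  rw [hBr, Finset.card_range]

def PA (s : Finset ℕ) : Prop := ∀ B m, (∀ x ∈ B, x < m) → 1 ≤ m → m - 1 ∈ B →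
  s = insert m B → grundy s = (m - B.card) % 2

def PE (s : Finset ℕ) : Prop := ∀ n m, n ≤ m → s = insert m (Finset.range n) →
  grundy s = m - n

def PG (s : Finset ℕ) : Prop := ∀ B m b, (∀ x ∈ B, x ≤ b) → b ∈ B → b + 2 ≤ m →
  B ≠ Finset.range B.card → s = insert m B → 2 ≤ grundy s

def PC (s : Finset ℕ) : Prop := ∀ B m b, (∀ x ∈ B, x ≤ b) → b ∈ B → 1 ≤ b → b - 1 ∈ B →
  b + 2 ≤ m → B ≠ Finset.range B.card → s = insert m B → grundy s = m - b

/-- Evaluation of a position `insert j B` whose top two coins are adjacent,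
written with `m - 1` the max of `B`. -/
lemma eval_drop {B : Finset ℕ} {m j : ℕ}
    (hBlt : ∀ x ∈ B, x < m) (hprev : m - 1 ∈ B) (hj : j < m) (hjB : j ∉ B)
    (hadj : m - 2 ∈ B ∨ j = m - 2)
    (hPA : PA (insert j B)) :
    grundy (insert j B) = (m - 1 - B.card) % 2 := by
  have hjm1 : j ≠ m - 1 := fun h => hjB (h ▸ hprev)
  have hm2 : 2 ≤ m := by omega
  set B0 := B.erase (m - 1) with hB0
  have hcpos : 0 < B.card := Finset.card_pos.2 ⟨_, hprev⟩
  have heq : insert j B = insert (m - 1) (insert j B0) := by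
    rw [Finset.insert_comm, Finset.insert_erase hprev]
  have hjB0 : j ∉ B0 := fun hc => hjB (Finset.mem_of_mem_erase hc)
  have hcard : (insert j B0).card = B.card := by
    rw [Finset.card_insert_of_notMem hjB0, hB0, Finset.card_erase_of_mem hprev]
    omega
  have hbound : ∀ x ∈ insert j B0, x < m - 1 := by
    intro x hx
    rcases Finset.mem_insert.1 hx with rfl | hx
    · omega
    · have h1 := hBlt x (Finset.mem_of_mem_erase hx)
      have h2 := Finset.ne_of_mem_erase hx
      omega
  have hprev' : m - 1 - 1 ∈ insert j B0 := by
    have hmm : m - 1 - 1 = m - 2 := by omega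
    rw [hmm]
    rcases hadj with h | rfl
    · exact Finset.mem_insert_of_mem (Finset.mem_erase.2 ⟨by omega, h⟩)
    · exact Finset.mem_insert_self _ _
  have := hPA (insert j B0) (m - 1) hbound (by omega) hprev' heq
  rw [this, hcard]

lemma master : ∀ (N : ℕ) (s : Finset ℕ), s.sum id = N → PA s ∧ PE s ∧ PG s ∧ PC s := by
  intro N
  induction N using Nat.strong_induction_on with
  | _ N ihN =>
  intro s hsN
  have IH : ∀ t : Finset ℕ, t.sum id < s.sum id → PA t ∧ PE t ∧ PG t ∧ PC t :=
    fun t ht => ihN (t.sum id) (by omega) t rfl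
  clear ihN hsN
  refine ⟨?_, ?_, ?_, ?_⟩
  · -- PA
    intro B m hBlt hm1 hprev heq
    subst heq
    set c := B.card with hc
    have hcpos : 0 < c := Finset.card_pos.2 ⟨_, hprev⟩
    have hcm : c ≤ m := by
      have hsub : B ⊆ Finset.range m := fun x hx => Finset.mem_range.2 (hBlt x hx)
      simpa using Finset.card_le_card hsub
    apply grundy_eq_of
    · intro t ht
      have hsum := ht.sum_lt
      rw [mwmove_insert_iff hBlt] at ht
      obtain ⟨j, hjm, hjB, rfl⟩ := ht
      have hjm1 : j ≠ m - 1 := fun h => hjB (h ▸ hprev)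
      have hcm' : c + 1 ≤ m := by
        have hsub : insert j B ⊆ Finset.range m := by
          intro x hx
          rcases Finset.mem_insert.1 hx with rfl | hx
          · exact Finset.mem_range.2 hjm
          · exact Finset.mem_range.2 (hBlt x hx)
        have := Finset.card_le_card hsub
        rw [Finset.card_insert_of_notMem hjB, Finset.card_range] at this
        omega
      by_cases hadj : m - 2 ∈ B ∨ j = m - 2
      · rw [eval_drop hBlt hprev hjm hjB hadj (IH _ hsum).1]
        omega
      · push_neg at hadj
        obtain ⟨hm2B, hjm2⟩ := hadj
        have hm2 : 2 ≤ m := by omega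
        set B0 := B.erase (m - 1) with hB0
        have heq : insert j B = insert (m - 1) (insert j B0) := by
          rw [Finset.insert_comm, Finset.insert_erase hprev]
        have hjB0 : j ∉ B0 := fun hc0 => hjB (Finset.mem_of_mem_erase hc0)
        have hcard : (insert j B0).card = c := by
          rw [Finset.card_insert_of_notMem hjB0, hB0, Finset.card_erase_of_mem hprev]
          omega
        have hbound3 : ∀ x ∈ insert j B0, x + 3 ≤ m := by
          intro x hx
          rcases Finset.mem_insert.1 hx with rfl | hx
          · omega
          · have h1 := hBlt x (Finset.mem_of_mem_erase hx)
            have h2 := Finset.ne_of_mem_erase hx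
            have h3 : x ≠ m - 2 := fun h => hm2B (h ▸ Finset.mem_of_mem_erase hx)
            omega
        rw [heq]
        by_cases hex : insert j B0 = Finset.range (insert j B0).card
        · have hPE := (IH _ (heq ▸ hsum)).2.1 c (m - 1) (by omega)
            (by rw [← hcard, ← hex])
          rw [hPE]
          omega
        · set B1 := insert j B0 with hB1
          have hb1ne : B1.Nonempty := ⟨j, Finset.mem_insert_self _ _⟩
          set b1 := B1.max' hb1ne with hb1
          have hb1mem : b1 ∈ B1 := B1.max'_mem hb1ne
          have hb1ub : ∀ x ∈ B1, x ≤ b1 := fun x hx => Finset.le_max' _ x hx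
          have hb1lt : b1 + 2 ≤ m - 1 := by
            have := hbound3 b1 hb1mem
            omega
          have hPG := (IH _ (heq ▸ hsum)).2.2.1 B1 (m - 1) b1 hb1ub hb1mem hb1lt hex rfl
          omega
    · intro v hv
      have he1 : (m - c) % 2 = 1 := by omega
      have hv0 : v = 0 := by omega
      have hclt : c < m := by
        rcases Nat.lt_or_ge c m with h | h
        · exact h
        · exfalso; have : m - c = 0 := by omega
          omega
      have hgap : ∃ j, j < m ∧ j ∉ B := by
        by_contra hcon
        push_neg at hcon
        have hsub : Finset.range m ⊆ B := fun x hx => hcon x (Finset.mem_range.1 hx)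
        have := Finset.card_le_card hsub
        rw [Finset.card_range] at this
        omega
      obtain ⟨j0, hj0m, hj0B⟩ := hgap
      have hm2 : 2 ≤ m := by omega
      by_cases hm2B : m - 2 ∈ B
      · have hmv : MWMove (insert m B) (insert j0 B) :=
          (mwmove_insert_iff hBlt).2 ⟨j0, hj0m, hj0B, rfl⟩
        refine ⟨insert j0 B, hmv, ?_⟩
        rw [eval_drop hBlt hprev hj0m hj0B (Or.inl hm2B) (IH _ hmv.sum_lt).1]
        omega
      · have hmv : MWMove (insert m B) (insert (m - 2) B) :=
          (mwmove_insert_iff hBlt).2 ⟨m - 2, by omega, hm2B, rfl⟩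
        refine ⟨insert (m - 2) B, hmv, ?_⟩
        rw [eval_drop hBlt hprev (by omega) hm2B (Or.inr rfl) (IH _ hmv.sum_lt).1]
        omega
  · -- PE
    intro n m hnm heq
    subst heq
    have hbound : ∀ x ∈ Finset.range n, x < m := fun x hx =>
      lt_of_lt_of_le (Finset.mem_range.1 hx) hnm
    apply grundy_eq_of
    · intro t ht
      have hsum := ht.sum_lt
      rw [mwmove_insert_iff hbound] at ht
      obtain ⟨j, hjm, hjn, rfl⟩ := ht
      have hnj : n ≤ j := by simpa [Finset.mem_range] using hjn
      have := (IH _ hsum).2.1 n j hnj rfl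
      omega
    · intro v hv
      have hmv : MWMove (insert m (Finset.range n)) (insert (n + v) (Finset.range n)) :=
        (mwmove_insert_iff hbound).2 ⟨n + v, by omega, by simp, rfl⟩
      refine ⟨_, hmv, ?_⟩
      have := (IH _ hmv.sum_lt).2.1 n (n + v) (by omega) rfl
      omega
  · -- PG
    intro B m b hub hbB hbm hne heq
    subst heq
    have hBlt : ∀ x ∈ B, x < m := fun x hx => by have := hub x hx; omega
    have hcb : B.card ≤ b := by
      have hsub : B ⊆ Finset.range (b + 1) := fun x hx =>
        Finset.mem_range.2 (by have := hub x hx; omega)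
      have h1 := Finset.card_le_card hsub
      rw [Finset.card_range] at h1
      rcases Nat.lt_or_ge B.card (b + 1) with h | h
      · omega
      · exfalso
        apply hne
        have hBr : B = Finset.range (b + 1) :=
          Finset.eq_of_subset_of_card_le hsub (by rw [Finset.card_range]; omega)
        have hcc : B.card = b + 1 := by rw [hBr, Finset.card_range]
        rw [hcc]
        exact hBr
    -- move 1 : slide to b+1
    have hb1B : b + 1 ∉ B := fun hc0 => by have := hub _ hc0; omega
    have hmv1 : MWMove (insert m B) (insert (b + 1) B) :=
      (mwmove_insert_iff hBlt).2 ⟨b + 1, by omega, hb1B, rfl⟩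
    have hg1 : grundy (insert (b + 1) B) = (b + 1 - B.card) % 2 :=
      (IH _ hmv1.sum_lt).1 B (b + 1) (fun x hx => by have := hub x hx; omega)
        (by omega) (by simpa using hbB) rfl
    -- move 2 : a drop to some gap, with value (b - c) % 2
    have hb1 : 1 ≤ b := by
      by_contra h
      push_neg at h
      have hb0 : b = 0 := by omega
      subst hb0
      apply hne
      have hB0 : B = {0} :=
        Finset.eq_singleton_iff_unique_mem.2
          ⟨hbB, fun x hx => Nat.le_antisymm (hub x hx) (Nat.zero_le x)⟩
      rw [hB0, Finset.card_singleton]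
      exact Finset.range_one.symm
    obtain ⟨t2, hmv2, hg2⟩ : ∃ t2, MWMove (insert m B) t2 ∧ grundy t2 = (b - B.card) % 2 := by
      by_cases hbprev : b - 1 ∈ B
      · obtain ⟨j0, hj0b, hj0B⟩ := exists_gap hbB hub hne
        have hmv : MWMove (insert m B) (insert j0 B) :=
          (mwmove_insert_iff hBlt).2 ⟨j0, by omega, hj0B, rfl⟩
        refine ⟨_, hmv, ?_⟩
        have := eval_drop (B := B) (m := b + 1) (j := j0)
          (fun x hx => by have := hub x hx; omega) (by simpa using hbB)
          (by omega) hj0B (Or.inl (by simpa using hbprev)) (IH _ hmv.sum_lt).1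
        rw [this]
        omega
      · have hj0B : b - 1 ∉ B := hbprev
        have hmv : MWMove (insert m B) (insert (b - 1) B) :=
          (mwmove_insert_iff hBlt).2 ⟨b - 1, by omega, hj0B, rfl⟩
        refine ⟨_, hmv, ?_⟩
        have := eval_drop (B := B) (m := b + 1) (j := b - 1)
          (fun x hx => by have := hub x hx; omega) (by simpa using hbB)
          (by omega) hj0B (Or.inr (by omega)) (IH _ hmv.sum_lt).1
        rw [this]
        omega
    have hne1 := grundy_ne_of_move hmv1
    have hne2 := grundy_ne_of_move hmv2
    rw [hg1] at hne1
    rw [hg2] at hne2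
    omega
  · -- PC
    intro B m b hub hbB hb1 hbprev hbm hne heq
    subst heq
    have hBlt : ∀ x ∈ B, x < m := fun x hx => by have := hub x hx; omega
    have hcb : B.card ≤ b := by
      have hsub : B ⊆ Finset.range (b + 1) := fun x hx =>
        Finset.mem_range.2 (by have := hub x hx; omega)
      have h1 := Finset.card_le_card hsub
      rcases Nat.lt_or_ge B.card (b + 1) with h | h
      · omega
      · exfalso
        apply hne
        have hBr : B = Finset.range (b + 1) :=
          Finset.eq_of_subset_of_card_le hsub (by rw [Finset.card_range]; omega)
        have hcc : B.card = b + 1 := by rw [hBr, Finset.card_range]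
        rw [hcc]
        exact hBr
    apply grundy_eq_of
    · intro t ht
      have hsum := ht.sum_lt
      rw [mwmove_insert_iff hBlt] at ht
      obtain ⟨j, hjm, hjB, rfl⟩ := ht
      rcases lt_trichotomy j b with hjb | hjb | hjb
      · -- drop
        have := eval_drop (B := B) (m := b + 1) (j := j)
          (fun x hx => by have := hub x hx; omega) (by simpa using hbB)
          (by omega) hjB (Or.inl (by simpa using hbprev)) (IH _ hsum).1
        rw [this]
        omega
      · exact absurd (hjb ▸ hbB) hjB
      · by_cases hj1 : j = b + 1
        · subst hj1
          have := (IH _ hsum).1 B (b + 1) (fun x hx => by have := hub x hx; omega)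
            (by omega) (by simpa using hbB) rfl
          rw [this]
          omega
        · have := (IH _ hsum).2.2.2 B j b hub hbB hb1 hbprev (by omega) hne rfl
          rw [this]
          omega
    · intro v hv
      rcases Nat.lt_or_ge v 2 with hv2 | hv2
      · by_cases hvp : v = (b - B.card) % 2
        · obtain ⟨j0, hj0b, hj0B⟩ := exists_gap hbB hub hne
          have hmv : MWMove (insert m B) (insert j0 B) :=
            (mwmove_insert_iff hBlt).2 ⟨j0, by omega, hj0B, rfl⟩
          refine ⟨_, hmv, ?_⟩
          have := eval_drop (B := B) (m := b + 1) (j := j0)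
            (fun x hx => by have := hub x hx; omega) (by simpa using hbB)
            (by omega) hj0B (Or.inl (by simpa using hbprev)) (IH _ hmv.sum_lt).1
          rw [this]
          omega
        · have hb1B : b + 1 ∉ B := fun hc0 => by have := hub _ hc0; omega
          have hmv : MWMove (insert m B) (insert (b + 1) B) :=
            (mwmove_insert_iff hBlt).2 ⟨b + 1, by omega, hb1B, rfl⟩
          refine ⟨_, hmv, ?_⟩
          have := (IH _ hmv.sum_lt).1 B (b + 1) (fun x hx => by have := hub x hx; omega)
            (by omega) (by simpa using hbB) rfl
          rw [this]
          omega
      · have hbvB : b + v ∉ B := fun hc0 => by have := hub _ hc0; omega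
        have hmv : MWMove (insert m B) (insert (b + v) B) :=
          (mwmove_insert_iff hBlt).2 ⟨b + v, by omega, hbvB, rfl⟩
        refine ⟨_, hmv, ?_⟩
        have := (IH _ hmv.sum_lt).2.2.2 B (b + v) b hub hbB hb1 hbprev (by omega) hne rfl
        rw [this]
        omega

lemma master_all (s : Finset ℕ) : PA s ∧ PE s ∧ PG s ∧ PC s := master _ s rfl


set_option maxHeartbeats 16000000 in
/-- if a_{k-2}+1 = a_{k-1} ≤ a_k - 2 and A is not of the form
(0,1,...,k-2,k+i) then G(A) = a_k - a_{k-1}. -/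
theorem maxWelter_grundy_eq_gap (k : ℕ) (hk : 3 ≤ k) (a : Fin k → ℕ) (ha : StrictMono a)
    (h1 : a ⟨k - 3, by omega⟩ + 1 = a ⟨k - 2, by omega⟩)
    (h2 : a ⟨k - 2, by omega⟩ + 2 ≤ a ⟨k - 1, by omega⟩)
    (h3 : ¬ ∃ i : ℕ, Finset.image a Finset.univ = insert (k + i) (Finset.range (k - 1))) :
    grundy (Finset.image a Finset.univ) =
      a ⟨k - 1, by omega⟩ - a ⟨k - 2, by omega⟩ := by
  obtain ⟨s, hs⟩ : ∃ s, s = Finset.image a Finset.univ := ⟨_, rfl⟩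
  obtain ⟨m, hm⟩ : ∃ m, m = a ⟨k - 1, by omega⟩ := ⟨_, rfl⟩
  obtain ⟨b, hb⟩ : ∃ b, b = a ⟨k - 2, by omega⟩ := ⟨_, rfl⟩
  rw [← hs, ← hm, ← hb]
  rw [← hs] at h3
  obtain ⟨B, hB⟩ : ∃ B, B = s.erase m := ⟨_, rfl⟩
  have hms : m ∈ s := by rw [hs, hm]; exact Finset.mem_image.2 ⟨_, Finset.mem_univ _, rfl⟩
  have hbs : b ∈ s := by rw [hs, hb]; exact Finset.mem_image.2 ⟨_, Finset.mem_univ _, rfl⟩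
  have hb3 : a ⟨k - 3, by omega⟩ = b - 1 := by omega
  have hb1s : b - 1 ∈ s := by
    rw [hs, ← hb3]; exact Finset.mem_image.2 ⟨_, Finset.mem_univ _, rfl⟩
  have hseq : s = insert m B := by rw [hB]; exact (Finset.insert_erase hms).symm
  have hub : ∀ x ∈ B, x ≤ b := by
    intro x hx
    rw [hB] at hx
    obtain ⟨hxne, hxs⟩ := Finset.mem_erase.1 hx
    rw [hs] at hxs
    obtain ⟨i, _, rfl⟩ := Finset.mem_image.1 hxs
    have hik : (i : ℕ) ≤ k - 2 := by
      rcases Nat.lt_or_ge (i : ℕ) (k - 1) with h | h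
      · omega
      · exfalso
        have hieq : i = (⟨k - 1, by omega⟩ : Fin k) := by
          apply Fin.ext
          have := i.isLt
          simp only
          omega
        exact hxne (by rw [hieq, hm])
    have := ha.monotone (show i ≤ (⟨k - 2, by omega⟩ : Fin k) from hik)
    omega
  have hbB : b ∈ B := by rw [hB]; exact Finset.mem_erase.2 ⟨by omega, hbs⟩
  have hbprev : b - 1 ∈ B := by rw [hB]; exact Finset.mem_erase.2 ⟨by omega, hb1s⟩
  have hcard : B.card = k - 1 := by
    rw [hB, Finset.card_erase_of_mem hms, hs,
      Finset.card_image_of_injective _ ha.injective]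
    simp
  have hne : B ≠ Finset.range B.card := by
    intro hcon
    apply h3
    have hbk : b = k - 2 := by
      have hx1 : b ≤ k - 2 := by
        have := hcon ▸ hbB
        rw [Finset.mem_range, hcard] at this
        omega
      have hx2 : (k - 2 : ℕ) ∈ B := by
        rw [hcon, Finset.mem_range, hcard]
        omega
      have := hub _ hx2
      omega
    refine ⟨m - k, ?_⟩
    have hmk : k + (m - k) = m := by omega
    rw [hmk, ← hcard, ← hcon, ← hseq]
  exact (master_all s).2.2.2 B m b hub hbB (by omega) hbprev (by omega) hne hseq
end

section
/- In misère Max-Welter, a position A = (a_1, ..., a_k) with k ≥ 2 is a P-position if and only if either (a) A = (0, 1, ..., l, l+2, l+3, ..., k) for some l ≤ k - 2, or (b) a_k = a_{k-1} + 1 and a_{k-1} + k is odd. -/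
/-- Set-level characterization of misère Max-Welter P-positions. -/
def MWP (s : Finset ℕ) : Prop :=
  (∃ h, 0 < h ∧ h < s.card ∧ s = (Finset.range (s.card + 1)).erase h) ∨
  (∃ m, m + 1 ∈ s ∧ (∀ x ∈ s, x ≤ m + 1) ∧ m ∈ s ∧ Odd (m + s.card))

lemma MWMove.card_eq {s t : Finset ℕ} (h : MWMove s t) : t.card = s.card := by
  obtain ⟨hs, j, hj, hjs, rfl⟩ := h
  have h1 : j ∉ s.erase (s.max' hs) := fun hc => hjs (Finset.mem_of_mem_erase hc)
  rw [Finset.card_insert_of_notMem h1, Finset.card_erase_of_mem (s.max'_mem hs)]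
  have : 1 ≤ s.card := Finset.card_pos.mpr hs
  omega

lemma notP_range {k : ℕ} (hk : 2 ≤ k) : ¬ MWP (Finset.range k) := by
  rintro (⟨h, h0, hk', heq⟩ | ⟨m, hm1, hub, hm, hodd⟩)
  · rw [Finset.card_range] at hk' heq
    have hkmem : k ∈ (Finset.range (k + 1)).erase h := by
      simp only [Finset.mem_erase, Finset.mem_range]
      omega
    rw [← heq, Finset.mem_range] at hkmem
    omega
  · rw [Finset.card_range] at hodd
    rw [Finset.mem_range] at hm1
    have h1 : k - 1 ∈ Finset.range k := by rw [Finset.mem_range]; omega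
    have h2 := hub _ h1
    rw [Nat.odd_iff] at hodd
    omega

lemma L1 {s t : Finset ℕ} (h2 : 2 ≤ s.card) (hP : MWP s) (hmv : MWMove s t) :
    ¬ MWP t := by
  have hcard := hmv.card_eq
  obtain ⟨hs, j, hj, hjs, rfl⟩ := hmv
  rcases hP with ⟨h, h0, hk, heq⟩ | ⟨m, hm1, hub, hm, hodd⟩
  · -- type (a)
    have hmem : ∀ x, x ∈ s ↔ (x ≠ h ∧ x < s.card + 1) := by
      intro x
      conv_lhs => rw [heq]
      simp [Finset.mem_erase, Finset.mem_range]
    have hbk : s.max' hs = s.card := by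
      apply le_antisymm
      · apply Finset.max'_le
        intro x hx
        rw [hmem x] at hx
        omega
      · apply Finset.le_max'
        rw [hmem]
        omega
    rw [hbk] at hj
    have hjh : j = h := by
      by_contra hne
      exact hjs ((hmem j).mpr ⟨hne, by omega⟩)
    have hteq : insert j (s.erase (s.max' hs)) = Finset.range s.card := by
      ext x
      simp only [Finset.mem_insert, Finset.mem_erase, Finset.mem_range, hmem x, hbk, hjh]
      omega
    rw [hteq]
    exact notP_range h2
  · -- type (b)
    have hbm : s.max' hs = m + 1 := le_antisymm (Finset.max'_le _ _ _ hub) (Finset.le_max' _ _ hm1)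
    rw [hbm] at hj hcard ⊢
    have hjm : j < m := by
      have hne : j ≠ m := fun e => hjs (e ▸ hm)
      omega
    have htub : ∀ x ∈ insert j (s.erase (m + 1)), x ≤ m := by
      intro x hx
      rcases Finset.mem_insert.mp hx with rfl | hx
      · omega
      · have h1 := (Finset.mem_erase.mp hx).1
        have h2' := hub x (Finset.mem_of_mem_erase hx)
        omega
    have htm : m ∈ insert j (s.erase (m + 1)) :=
      Finset.mem_insert_of_mem (Finset.mem_erase.mpr ⟨by omega, hm⟩)
    rintro (⟨h', h'0, h'k, heq'⟩ | ⟨m', hm'1, hub', hm', hodd'⟩)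
    · rw [hcard] at h'k heq'
      have hkt : s.card ∈ insert j (s.erase (m + 1)) := by
        rw [heq']
        simp only [Finset.mem_erase, Finset.mem_range]
        omega
      have h1 : s.card ≤ m := htub _ hkt
      have h2' := htm
      rw [heq'] at h2'
      simp only [Finset.mem_erase, Finset.mem_range] at h2'
      rw [Nat.odd_iff] at hodd
      omega
    · have h1 : m' + 1 ≤ m := htub _ hm'1
      have h2' : m ≤ m' + 1 := hub' _ htm
      rw [hcard] at hodd'
      rw [Nat.odd_iff] at hodd hodd'
      omega

lemma L2 {s : Finset ℕ} (h2 : 2 ≤ s.card) (hs : s.Nonempty)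
    (hnt : ∃ j, j < s.max' hs ∧ j ∉ s) (hnP : ¬ MWP s) :
    ∃ t, MWMove s t ∧ MWP t := by
  set b := s.max' hs with hb
  have hbs : b ∈ s := s.max'_mem hs
  have hub : ∀ x ∈ s, x ≤ b := fun x hx => Finset.le_max' s x hx
  have hse : (s.erase b).Nonempty := by
    rw [← Finset.card_pos, Finset.card_erase_of_mem hbs]; omega
  set m := (s.erase b).max' hse with hm
  have hmes : m ∈ s.erase b := (s.erase b).max'_mem hse
  have hms : m ∈ s := Finset.mem_of_mem_erase hmes
  have hmb : m ≠ b := (Finset.mem_erase.mp hmes).1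
  have hmlt : m < b := lt_of_le_of_ne (hub m hms) hmb
  have hub2 : ∀ x ∈ s, x ≠ b → x ≤ m := fun x hx hne =>
    Finset.le_max' _ x (Finset.mem_erase.mpr ⟨hne, hx⟩)
  have mk : ∀ j, j < b → j ∉ s → MWMove s (insert j (s.erase b)) := by
    intro j hj hjs
    exact ⟨hs, j, hj, hjs, rfl⟩
  by_cases hodd : Odd (m + s.card)
  · -- move the max coin to m+1
    have hbne : b ≠ m + 1 := by
      intro he
      exact hnP (Or.inr ⟨m, he ▸ hbs, fun x hx => he ▸ hub x hx, hms, hodd⟩)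
    have hm1s : m + 1 ∉ s := fun hc => by
      have := hub2 _ hc (by omega); omega
    have hmv := mk (m + 1) (by omega) hm1s
    have hc := hmv.card_eq
    refine ⟨_, hmv, Or.inr ⟨m, Finset.mem_insert_self _ _, ?_,
      Finset.mem_insert_of_mem (Finset.mem_erase.mpr ⟨hmb, hms⟩), ?_⟩⟩
    · intro x hx
      rcases Finset.mem_insert.mp hx with rfl | hx
      · omega
      · have := hub2 x (Finset.mem_of_mem_erase hx) (Finset.mem_erase.mp hx).1
        omega
    · rw [hc]; exact hodd
  · by_cases hall : ∀ j, j < m → j ∈ s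
    · -- everything below m occupied
      have hbelow : ∀ x, x ≤ m → x ∈ s := by
        intro x hx
        rcases Nat.lt_or_ge x m with h | h
        · exact hall _ h
        · have : x = m := by omega
          exact this ▸ hms
      have hbne : b ≠ m + 1 := by
        intro he
        obtain ⟨j0, hj0b, hj0s⟩ := hnt
        exact hj0s (hbelow _ (by omega))
      have hb2 : m + 2 ≤ b := by omega
      have herase : s.erase b = Finset.range (m + 1) := by
        ext x
        simp only [Finset.mem_erase, Finset.mem_range]
        constructor
        · rintro ⟨hne, hx⟩
          have := hub2 x hx hne
          omega
        · intro hx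
          exact ⟨by omega, hbelow _ (by omega)⟩
      have hcards : s.card = m + 2 := by
        have h3 := Finset.card_erase_of_mem hbs
        rw [herase, Finset.card_range] at h3
        omega
      have hmemx : ∀ x, x ∈ s ↔ (x = b ∨ x < m + 1) := by
        intro x
        conv_lhs => rw [← Finset.insert_erase hbs]
        rw [herase]
        simp only [Finset.mem_insert, Finset.mem_range]
      have hbk : b ≠ s.card := by
        intro he
        apply hnP
        left
        refine ⟨s.card - 1, by omega, by omega, ?_⟩
        ext x
        rw [hmemx x]
        simp only [Finset.mem_erase, Finset.mem_range, hcards]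
        omega
      have hkns : s.card ∉ s := by
        intro hc
        have := hub2 _ hc (Ne.symm hbk)
        omega
      have hmv := mk s.card (by omega) hkns
      have hc := hmv.card_eq
      refine ⟨_, hmv, Or.inl ⟨m + 1, by omega, by rw [hc]; omega, ?_⟩⟩
      rw [hc, herase]
      ext x
      simp only [Finset.mem_insert, Finset.mem_range, Finset.mem_erase]
      omega
    · push_neg at hall
      obtain ⟨j1, hj1m, hj1s⟩ := hall
      have hm1 : 1 ≤ m := by omega
      rw [Nat.odd_iff] at hodd
      by_cases hm's : m - 1 ∈ s
      · -- move to any hole below m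
        have hmv := mk j1 (by omega) hj1s
        have hc := hmv.card_eq
        refine ⟨_, hmv, Or.inr ⟨m - 1, ?_, ?_, ?_, ?_⟩⟩
        · rw [show m - 1 + 1 = m by omega]
          exact Finset.mem_insert_of_mem (Finset.mem_erase.mpr ⟨hmb, hms⟩)
        · intro x hx
          rcases Finset.mem_insert.mp hx with rfl | hx
          · omega
          · have := hub2 x (Finset.mem_of_mem_erase hx) (Finset.mem_erase.mp hx).1
            omega
        · exact Finset.mem_insert_of_mem (Finset.mem_erase.mpr ⟨by omega, hm's⟩)
        · rw [hc, Nat.odd_iff]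
          omega
      · -- move to m-1
        have hmv := mk (m - 1) (by omega) hm's
        have hc := hmv.card_eq
        refine ⟨_, hmv, Or.inr ⟨m - 1, ?_, ?_, Finset.mem_insert_self _ _, ?_⟩⟩
        · rw [show m - 1 + 1 = m by omega]
          exact Finset.mem_insert_of_mem (Finset.mem_erase.mpr ⟨hmb, hms⟩)
        · intro x hx
          rcases Finset.mem_insert.mp hx with rfl | hx
          · omega
          · have := hub2 x (Finset.mem_of_mem_erase hx) (Finset.mem_erase.mp hx).1
            omega
        · rw [hc, Nat.odd_iff]
          omega
lemma MW_main : ∀ s : Finset ℕ, 2 ≤ s.card → (¬ MWMisereWin s ↔ MWP s) := by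
  have key : ∀ n, ∀ s : Finset ℕ, s.sum id = n → 2 ≤ s.card → (¬ MWMisereWin s ↔ MWP s) := by
    intro n
    induction n using Nat.strong_induction_on with
    | _ n ih =>
      intro s hsum h2
      have hs : s.Nonempty := Finset.card_pos.mp (by omega)
      rw [MWMisereWin]
      by_cases hterm : ∀ t, ¬ MWMove s t
      · apply iff_of_false (not_not_intro (Or.inl hterm))
        have hub : ∀ j, j < s.max' hs → j ∈ s := by
          intro j hj
          by_contra hjs
          exact hterm _ ⟨hs, j, hj, hjs, rfl⟩
        have hseq : s = Finset.range (s.max' hs + 1) := by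
          ext x
          rw [Finset.mem_range]
          constructor
          · intro hx
            have := Finset.le_max' s x hx
            omega
          · intro hx
            rcases Nat.lt_or_ge x (s.max' hs) with h | h
            · exact hub _ h
            · have : x = s.max' hs := by omega
              exact this ▸ s.max'_mem hs
        have hck : s.card = s.max' hs + 1 := by
          conv_lhs => rw [hseq]
          exact Finset.card_range _
        rw [hseq, ← hck]
        exact notP_range h2
      · push_neg at hterm
        obtain ⟨t0, hmv0⟩ := hterm
        have hnt : ∃ j, j < s.max' hs ∧ j ∉ s := by
          obtain ⟨hs', j, hj, hjs, _⟩ := hmv0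
          exact ⟨j, hj, hjs⟩
        constructor
        · intro hnw
          by_contra hnP
          obtain ⟨t, hmv, hPt⟩ := L2 h2 hs hnt hnP
          apply hnw
          right
          refine ⟨t, hmv, ?_⟩
          rw [ih (t.sum id) (hsum ▸ hmv.sum_lt) t rfl (hmv.card_eq ▸ h2)]
          exact hPt
        · rintro hP (hterm' | ⟨t, hmv, hnw⟩)
          · exact hterm' t0 hmv0
          · have hPt := (ih (t.sum id) (hsum ▸ hmv.sum_lt) t rfl (hmv.card_eq ▸ h2)).mp hnw
            exact L1 h2 hP hmv hPt
  exact fun s => key (s.sum id) s rfl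


/-- P-positions of misère Max-Welter. -/
theorem maxWelter_misere_PPos_iff (k : ℕ) (hk : 2 ≤ k) (a : Fin k → ℕ)
    (ha : StrictMono a) :
    ¬ MWMisereWin (Finset.image a Finset.univ) ↔
      (∃ l, l ≤ k - 2 ∧
        Finset.image a Finset.univ = (Finset.range (k + 1)).erase (l + 1)) ∨
      (a ⟨k - 1, by omega⟩ = a ⟨k - 2, by omega⟩ + 1 ∧
        Odd (a ⟨k - 2, by omega⟩ + k)) := by
  have hinj := ha.injective
  set S := Finset.image a Finset.univ with hS
  have hcard : S.card = k := by
    rw [hS, Finset.card_image_of_injective _ hinj, Finset.card_univ, Fintype.card_fin]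
  have h2 : 2 ≤ S.card := by omega
  rw [MW_main S h2]
  have hmemS : ∀ x, x ∈ S ↔ ∃ i, a i = x := by
    intro x
    simp [hS]
  constructor
  · rintro (⟨h, h0, hkk, heq⟩ | ⟨m, hm1, hub, hm, hodd⟩)
    · rw [hcard] at hkk heq
      left
      exact ⟨h - 1, by omega, by rw [show h - 1 + 1 = h by omega]; exact heq⟩
    · rw [hcard] at hodd
      right
      have hmax : a ⟨k - 1, by omega⟩ = m + 1 := by
        apply le_antisymm
        · exact hub _ ((hmemS _).mpr ⟨_, rfl⟩)
        · obtain ⟨i, hi⟩ := (hmemS _).mp hm1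
          rw [← hi]
          exact ha.monotone (by rw [Fin.le_def]; have := i.isLt; simp; omega)
      have hsec : a ⟨k - 2, by omega⟩ = m := by
        obtain ⟨i, hi⟩ := (hmemS _).mp hm
        have hine : (i : ℕ) ≠ k - 1 := by
          intro he
          have : i = (⟨k - 1, by omega⟩ : Fin k) := Fin.ext he
          rw [this, hmax] at hi
          omega
        have h1 : a i ≤ a ⟨k - 2, by omega⟩ := by
          apply ha.monotone
          rw [Fin.le_def]
          have := i.isLt
          simp
          omega
        have h2' : a (⟨k - 2, by omega⟩ : Fin k) < a ⟨k - 1, by omega⟩ := by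
          apply ha
          rw [Fin.lt_def]
          simp
          omega
        omega
      exact ⟨by rw [hmax, hsec], by rw [hsec]; exact hodd⟩
  · rintro (⟨l, hl, heq⟩ | ⟨hadj, hodd⟩)
    · left
      exact ⟨l + 1, by omega, by rw [hcard]; omega, by rw [hcard]; exact heq⟩
    · right
      refine ⟨a ⟨k - 2, by omega⟩, ?_, ?_, (hmemS _).mpr ⟨_, rfl⟩, ?_⟩
      · rw [← hadj]
        exact (hmemS _).mpr ⟨_, rfl⟩
      · intro x hx
        obtain ⟨i, rfl⟩ := (hmemS _).mp hx
        rw [← hadj]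
        exact ha.monotone (by rw [Fin.le_def]; have := i.isLt; simp; omega)
      · simp only [hcard]
        exact hodd
end
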